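/- The constrained minimax regret is monotone in the right end of the last block: for every q ≥ 1 and every r with q − 1 ≤ r < n, M(q, r) ≤ M(q, r+1). -/
import Mathlib


/-- Maximum of `f` over a finite set of indices, with the empty maximum being `0`. -/
noncomputable def maxOver (S : Finset ℕ) (f : ℕ → ℝ) : ℝ := S.fold max 0 f

/-- Left evacuation time to sink `x t` of the subpath starting at `x l`, under weights `w`. -/
noncomputable def thetaL (x : ℕ → ℝ) (τ : ℝ) (w : ℕ → ℝ) (l t : ℕ) : ℝ :=
  maxOver (Finset.Ico l t) (fun i => (x t - x i) * τ + ∑ j ∈ Finset.Icc l i, w j)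

/-- Right evacuation time to sink `x t` of the subpath ending at `x r`, under weights `w`. -/
noncomputable def thetaR (x : ℕ → ℝ) (τ : ℝ) (w : ℕ → ℝ) (t r : ℕ) : ℝ :=
  maxOver (Finset.Ioc t r) (fun i => (x i - x t) * τ + ∑ j ∈ Finset.Icc i r, w j)

/-- 1-sink evacuation time `Θ¹([x_l,x_r], x_t, w)`. -/
noncomputable def theta1 (x : ℕ → ℝ) (τ : ℝ) (w : ℕ → ℝ) (l t r : ℕ) : ℝ :=
  max (thetaL x τ w l t) (thetaR x τ w t r)

/-- A scenario assigns each vertex a weight within its bounds. -/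
def IsScenario (n : ℕ) (wlo whi : ℕ → ℝ) (s : ℕ → ℝ) : Prop :=
  ∀ i, i ≤ n → wlo i ≤ s i ∧ s i ≤ whi i

/-- A `k`-partition-with-sinks of the vertex set `{0,…,n}` into `k` consecutive
nonempty blocks `{l p, …, r p}` (`p ∈ {1,…,k}`) with a sink `t p` in each block. -/
structure KPartSinks (n k : ℕ) where
  l : ℕ → ℕ
  r : ℕ → ℕ
  t : ℕ → ℕ
  first : l 1 = 0
  last : r k = n
  consec : ∀ p, 1 ≤ p → p < k → l (p + 1) = r p + 1
  block_nonempty : ∀ p, 1 ≤ p → p ≤ k → l p ≤ r p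
  sink_lb : ∀ p, 1 ≤ p → p ≤ k → l p ≤ t p
  sink_ub : ∀ p, 1 ≤ p → p ≤ k → t p ≤ r p

/-- `k`-sink evacuation time `Θᵏ(P, {P̂,Ŷ}, w)`. -/
noncomputable def thetaK {n k : ℕ} (x : ℕ → ℝ) (τ : ℝ) (PY : KPartSinks n k) (w : ℕ → ℝ) : ℝ :=
  maxOver (Finset.Icc 1 k) (fun p => theta1 x τ w (PY.l p) (PY.t p) (PY.r p))

/-- Optimal `k`-sink evacuation time `Θᵏ_opt(P, w)`. -/
noncomputable def thetaOpt (x : ℕ → ℝ) (τ : ℝ) (n k : ℕ) (w : ℕ → ℝ) : ℝ :=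
  sInf {v : ℝ | ∃ PY : KPartSinks n k, thetaK x τ PY w = v}

/-- Regret `R({P̂,Ŷ}, w)`. -/
noncomputable def regret {n k : ℕ} (x : ℕ → ℝ) (τ : ℝ) (PY : KPartSinks n k) (w : ℕ → ℝ) : ℝ :=
  thetaK x τ PY w - thetaOpt x τ n k w

/-- Max-regret `R_max({P̂,Ŷ})`. -/
noncomputable def maxRegret {n k : ℕ} (x : ℕ → ℝ) (τ : ℝ) (wlo whi : ℕ → ℝ)
    (PY : KPartSinks n k) : ℝ :=
  sSup {v : ℝ | ∃ s : ℕ → ℝ, IsScenario n wlo whi s ∧ regret x τ PY s = v}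

/-- A worst-case scenario: a scenario attaining the max-regret. -/
def IsWorstCase {n k : ℕ} (x : ℕ → ℝ) (τ : ℝ) (wlo whi : ℕ → ℝ) (PY : KPartSinks n k)
    (s : ℕ → ℝ) : Prop :=
  IsScenario n wlo whi s ∧ regret x τ PY s = maxRegret x τ wlo whi PY

/-- `d` is the index of the dominant part of `{P̂,Ŷ}` under weights `w`:
the smallest index attaining `max_p Θ¹(P_p, y_p, w)`. -/
def IsDominant {n k : ℕ} (x : ℕ → ℝ) (τ : ℝ) (PY : KPartSinks n k) (w : ℕ → ℝ) (d : ℕ) : Prop :=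
  1 ≤ d ∧ d ≤ k ∧
  (∀ p, 1 ≤ p → p ≤ k →
    theta1 x τ w (PY.l p) (PY.t p) (PY.r p) ≤ theta1 x τ w (PY.l d) (PY.t d) (PY.r d)) ∧
  (∀ p, 1 ≤ p → p < d →
    theta1 x τ w (PY.l p) (PY.t p) (PY.r p) < theta1 x τ w (PY.l d) (PY.t d) (PY.r d))

/-- `R_{lr}(x_t)`: the max-regret of the subpath `[x_l,x_r]` as assumed dominant
part with sink `x_t`. -/
noncomputable def Rsink (x : ℕ → ℝ) (τ : ℝ) (wlo whi : ℕ → ℝ) (n k : ℕ) (l r t : ℕ) : ℝ :=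
  sSup {v : ℝ | ∃ s : ℕ → ℝ, IsScenario n wlo whi s ∧
    theta1 x τ s l t r - thetaOpt x τ n k s = v}

/-- `R_{lr}`: the minimax regret of the subpath `[x_l,x_r]` as assumed dominant part. -/
noncomputable def Rlr (x : ℕ → ℝ) (τ : ℝ) (wlo whi : ℕ → ℝ) (n k : ℕ) (l r : ℕ) : ℝ :=
  sInf {v : ℝ | ∃ t, l ≤ t ∧ t ≤ r ∧ Rsink x τ wlo whi n k l r t = v}

/-- A partition of `{0,…,i}` into `q` consecutive nonempty blocks `{l p, …, r p}`. -/
def IsQPartition (q i : ℕ) (l r : ℕ → ℕ) : Prop :=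
  l 1 = 0 ∧ r q = i ∧ (∀ p, 1 ≤ p → p < q → l (p + 1) = r p + 1) ∧
  (∀ p, 1 ≤ p → p ≤ q → l p ≤ r p)

/-- `M(q, i)`: the minimum over partitions of `{0,…,i}` into `q` consecutive
nonempty blocks of `max_p R_{l_p r_p}`. -/
noncomputable def Mreg (x : ℕ → ℝ) (τ : ℝ) (wlo whi : ℕ → ℝ) (n k : ℕ) (q i : ℕ) : ℝ :=
  sInf {v : ℝ | ∃ lf rf : ℕ → ℕ, IsQPartition q i lf rf ∧
    maxOver (Finset.Icc 1 q) (fun p => Rlr x τ wlo whi n k (lf p) (rf p)) = v}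

/-- Left-dominant scenario on `{l,…,r}`. -/
def LeftDominant (wlo whi s : ℕ → ℝ) (l r : ℕ) : Prop :=
  ∃ i, l ≤ i ∧ i ≤ r + 1 ∧ (∀ j, l ≤ j → j < i → s j = whi j) ∧
    (∀ j, i ≤ j → j ≤ r → s j = wlo j)

/-- Right-dominant scenario on `{l,…,r}`. -/
def RightDominant (wlo whi s : ℕ → ℝ) (l r : ℕ) : Prop :=
  ∃ i, l ≤ i ∧ i ≤ r + 1 ∧ (∀ j, l ≤ j → j < i → s j = wlo j) ∧
    (∀ j, i ≤ j → j ≤ r → s j = whi j)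


section Aux

lemma maxOver_nonneg (S : Finset ℕ) (f : ℕ → ℝ) : 0 ≤ maxOver S f :=
  (Finset.le_fold_max (0:ℝ)).mpr (Or.inl le_rfl)

lemma le_maxOver {S : Finset ℕ} {f : ℕ → ℝ} {i : ℕ} (hi : i ∈ S) : f i ≤ maxOver S f :=
  (Finset.le_fold_max (f i)).mpr (Or.inr ⟨i, hi, le_rfl⟩)

lemma maxOver_le {S : Finset ℕ} {f : ℕ → ℝ} {c : ℝ} (h0 : 0 ≤ c) (h : ∀ i ∈ S, f i ≤ c) :
    maxOver S f ≤ c := (Finset.fold_max_le c).mpr ⟨h0, h⟩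

lemma theta1_nonneg (x : ℕ → ℝ) (τ : ℝ) (w : ℕ → ℝ) (l t r : ℕ) :
    0 ≤ theta1 x τ w l t r :=
  le_trans (maxOver_nonneg _ _) (le_max_left _ _)

variable {n k : ℕ} {x : ℕ → ℝ} {τ : ℝ} {wlo whi : ℕ → ℝ}

lemma x_mono (hx : ∀ i, i < n → x i < x (i + 1)) :
    ∀ i j, i ≤ j → j ≤ n → x i ≤ x j := by
  intro i j hij hj
  induction j with
  | zero =>
    have h0 : i = 0 := by omega
    simp [h0]
  | succ m ih =>
    rcases Nat.lt_or_ge i (m + 1) with h | h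
    · exact (ih (by omega) (by omega)).trans (hx m (by omega)).le
    · have h0 : i = m + 1 := by omega
      simp [h0]

lemma scenario_nonneg (hw : ∀ i, i ≤ n → 0 < wlo i ∧ wlo i ≤ whi i)
    {s : ℕ → ℝ} (hs : IsScenario n wlo whi s) : ∀ j, j ≤ n → 0 ≤ s j :=
  fun j hj => le_trans (hw j hj).1.le (hs j hj).1

lemma theta1_le_bound (hx : ∀ i, i < n → x i < x (i + 1)) (hτ : 0 < τ)
    (hw : ∀ i, i ≤ n → 0 < wlo i ∧ wlo i ≤ whi i)
    {s : ℕ → ℝ} (hs : IsScenario n wlo whi s) {l t r : ℕ}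
    (hlt : l ≤ t) (htr : t ≤ r) (hrn : r ≤ n) :
    theta1 x τ s l t r ≤ (x n - x 0) * τ + ∑ j ∈ Finset.range (n + 1), whi j := by
  have hxm := x_mono (n := n) hx
  have hsum : ∀ a b : ℕ, b ≤ n →
      ∑ j ∈ Finset.Icc a b, s j ≤ ∑ j ∈ Finset.range (n + 1), whi j := by
    intro a b hb
    calc ∑ j ∈ Finset.Icc a b, s j ≤ ∑ j ∈ Finset.Icc a b, whi j :=
          Finset.sum_le_sum (fun j hj =>
            (hs j (le_trans (Finset.mem_Icc.mp hj).2 hb)).2)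
      _ ≤ ∑ j ∈ Finset.range (n + 1), whi j := by
          apply Finset.sum_le_sum_of_subset_of_nonneg
          · intro j hj
            rw [Finset.mem_range]
            have := (Finset.mem_Icc.mp hj).2; omega
          · intro j hj _
            rw [Finset.mem_range] at hj
            exact le_trans (hw j (by omega)).1.le (hw j (by omega)).2
  have hsum0 : (0:ℝ) ≤ ∑ j ∈ Finset.range (n + 1), whi j := by
    refine le_trans ?_ (hsum (n+1) 0 (by omega))
    rw [Finset.Icc_eq_empty (by omega)]
    simp
  have hx0 : (0:ℝ) ≤ (x n - x 0) * τ := by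
    have := hxm 0 n (by omega) le_rfl
    nlinarith
  have hC0 : (0:ℝ) ≤ (x n - x 0) * τ + ∑ j ∈ Finset.range (n + 1), whi j := by linarith
  refine max_le ?_ ?_
  · apply maxOver_le hC0
    intro i hi
    rw [Finset.mem_Ico] at hi
    have h1 : (x t - x i) * τ ≤ (x n - x 0) * τ := by
      have h2 := hxm t n (by omega) le_rfl
      have h3 := hxm 0 i (by omega) (by omega)
      nlinarith
    have h4 := hsum l i (by omega)
    linarith
  · apply maxOver_le hC0
    intro i hi
    rw [Finset.mem_Ioc] at hi
    have h1 : (x i - x t) * τ ≤ (x n - x 0) * τ := by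
      have h2 := hxm i n (by omega) le_rfl
      have h3 := hxm 0 t (by omega) (by omega)
      nlinarith
    have h4 := hsum i r hrn
    linarith

lemma thetaOpt_nonneg (x : ℕ → ℝ) (τ : ℝ) (n k : ℕ) (s : ℕ → ℝ) :
    0 ≤ thetaOpt x τ n k s := by
  apply Real.sInf_nonneg
  rintro v ⟨PY, rfl⟩
  exact maxOver_nonneg _ _

lemma theta1_step_same_t (hτ : 0 < τ)
    (hw : ∀ i, i ≤ n → 0 < wlo i ∧ wlo i ≤ whi i)
    {s : ℕ → ℝ} (hs : IsScenario n wlo whi s) {l t m : ℕ}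
    (htm : t ≤ m) (hmn : m + 1 ≤ n) :
    theta1 x τ s l t m ≤ theta1 x τ s l t (m + 1) := by
  refine max_le_max le_rfl ?_
  apply maxOver_le (maxOver_nonneg _ _)
  intro i hi
  rw [Finset.mem_Ioc] at hi
  have hstep : (x i - x t) * τ + ∑ j ∈ Finset.Icc i m, s j ≤
      (x i - x t) * τ + ∑ j ∈ Finset.Icc i (m + 1), s j := by
    rw [Finset.sum_Icc_succ_top (by omega : i ≤ m + 1)]
    have := scenario_nonneg hw hs (m + 1) hmn
    linarith
  have hmem : i ∈ Finset.Ioc t (m + 1) := Finset.mem_Ioc.mpr ⟨hi.1, by omega⟩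
  exact le_trans hstep
    (le_maxOver (f := fun i => (x i - x t) * τ + ∑ j ∈ Finset.Icc i (m + 1), s j) hmem)

lemma theta1_step_sink (hx : ∀ i, i < n → x i < x (i + 1)) (hτ : 0 < τ)
    {s : ℕ → ℝ} {l m : ℕ} (hlm : l ≤ m) (hmn : m + 1 ≤ n) :
    theta1 x τ s l m m ≤ theta1 x τ s l (m + 1) (m + 1) := by
  refine max_le ?_ ?_
  · refine le_trans ?_ (le_max_left _ _)
    apply maxOver_le (maxOver_nonneg _ _)
    intro i hi
    rw [Finset.mem_Ico] at hi
    have hxm : x m ≤ x (m + 1) := (hx m (by omega)).le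
    have hstep : (x m - x i) * τ + ∑ j ∈ Finset.Icc l i, s j ≤
        (x (m+1) - x i) * τ + ∑ j ∈ Finset.Icc l i, s j := by nlinarith
    have hmem : i ∈ Finset.Ico l (m + 1) := Finset.mem_Ico.mpr ⟨hi.1, by omega⟩
    exact le_trans hstep
      (le_maxOver (f := fun i => (x (m + 1) - x i) * τ + ∑ j ∈ Finset.Icc l i, s j) hmem)
  · have h0 : thetaR x τ s m m = 0 := by
      simp [thetaR, maxOver]
    rw [h0]
    exact theta1_nonneg _ _ _ _ _ _

lemma Rsink_le (hx : ∀ i, i < n → x i < x (i + 1)) (hτ : 0 < τ)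
    (hw : ∀ i, i ≤ n → 0 < wlo i ∧ wlo i ≤ whi i)
    {l t r1 l' t' r2 : ℕ} (hb1 : l' ≤ t') (hb2 : t' ≤ r2) (hb3 : r2 ≤ n)
    (h : ∀ s, IsScenario n wlo whi s → theta1 x τ s l t r1 ≤ theta1 x τ s l' t' r2) :
    Rsink x τ wlo whi n k l r1 t ≤ Rsink x τ wlo whi n k l' r2 t' := by
  have hwlo : IsScenario n wlo whi wlo := fun i hi => ⟨le_rfl, (hw i hi).2⟩
  have hbA : BddAbove {v : ℝ | ∃ s : ℕ → ℝ, IsScenario n wlo whi s ∧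
      theta1 x τ s l' t' r2 - thetaOpt x τ n k s = v} := by
    refine ⟨(x n - x 0) * τ + ∑ j ∈ Finset.range (n + 1), whi j, ?_⟩
    rintro v ⟨s', hs', rfl⟩
    have h1 := theta1_le_bound hx hτ hw hs' hb1 hb2 hb3
    have h2 := thetaOpt_nonneg x τ n k s'
    linarith
  unfold Rsink
  refine csSup_le ?_ ?_
  · exact ⟨theta1 x τ wlo l t r1 - thetaOpt x τ n k wlo, wlo, hwlo, rfl⟩
  rintro v ⟨s, hsc, rfl⟩
  have h3 := h s hsc
  calc theta1 x τ s l t r1 - thetaOpt x τ n k s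
      ≤ theta1 x τ s l' t' r2 - thetaOpt x τ n k s := by linarith
    _ ≤ sSup {v : ℝ | ∃ s : ℕ → ℝ, IsScenario n wlo whi s ∧
          theta1 x τ s l' t' r2 - thetaOpt x τ n k s = v} := le_csSup hbA ⟨s, hsc, rfl⟩

lemma Rlr_le {l r1 l' r2 : ℕ} (hl' : l' ≤ r2)
    (h : ∀ t', l' ≤ t' → t' ≤ r2 → ∃ t, l ≤ t ∧ t ≤ r1 ∧
      Rsink x τ wlo whi n k l r1 t ≤ Rsink x τ wlo whi n k l' r2 t') :
    Rlr x τ wlo whi n k l r1 ≤ Rlr x τ wlo whi n k l' r2 := by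
  have hbdd : BddBelow {v : ℝ | ∃ t, l ≤ t ∧ t ≤ r1 ∧ Rsink x τ wlo whi n k l r1 t = v} := by
    refine BddBelow.mono ?_ ((Set.finite_Icc l r1).image
      (fun t => Rsink x τ wlo whi n k l r1 t)).bddBelow
    rintro v ⟨t, h1, h2, he⟩
    exact ⟨t, Set.mem_Icc.mpr ⟨h1, h2⟩, he⟩
  unfold Rlr
  refine le_csInf ?_ ?_
  · exact ⟨Rsink x τ wlo whi n k l' r2 l', l', le_rfl, hl', rfl⟩
  rintro b ⟨t', h1, h2, rfl⟩
  obtain ⟨t, ht1, ht2, hle⟩ := h t' h1 h2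
  exact le_trans (csInf_le hbdd ⟨t, ht1, ht2, rfl⟩) hle

lemma Rlr_mono_right (hx : ∀ i, i < n → x i < x (i + 1)) (hτ : 0 < τ)
    (hw : ∀ i, i ≤ n → 0 < wlo i ∧ wlo i ≤ whi i)
    {l m1 m2 : ℕ} (hl : l ≤ m1) (h12 : m1 ≤ m2) (hn : m2 ≤ n) :
    Rlr x τ wlo whi n k l m1 ≤ Rlr x τ wlo whi n k l m2 := by
  induction m2, h12 using Nat.le_induction with
  | base => exact le_rfl
  | succ m2 hm ih =>
    refine le_trans (ih (by omega)) ?_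
    apply Rlr_le (by omega : l ≤ m2 + 1)
    intro t' h1 h2
    rcases Nat.lt_or_ge t' (m2 + 1) with hc | hc
    · exact ⟨t', h1, by omega,
        Rsink_le hx hτ hw h1 h2 hn
          (fun s hs => theta1_step_same_t hτ hw hs (by omega) hn)⟩
    · have ht' : t' = m2 + 1 := by omega
      subst ht'
      exact ⟨m2, by omega, le_rfl,
        Rsink_le hx hτ hw (by omega) le_rfl hn
          (fun s hs => theta1_step_sink hx hτ (by omega) hn)⟩

lemma Rlr_singleton_le (hx : ∀ i, i < n → x i < x (i + 1)) (hτ : 0 < τ)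
    (hw : ∀ i, i ≤ n → 0 < wlo i ∧ wlo i ≤ whi i)
    {j l m : ℕ} (hlm : l ≤ m) (hmn : m ≤ n) :
    Rlr x τ wlo whi n k j j ≤ Rlr x τ wlo whi n k l m := by
  apply Rlr_le hlm
  intro t' h1 h2
  refine ⟨j, le_rfl, le_rfl, Rsink_le hx hτ hw h1 h2 hmn ?_⟩
  intro s hs
  have h0 : theta1 x τ s j j j = 0 := by
    simp [theta1, thetaL, thetaR, maxOver]
  rw [h0]
  exact theta1_nonneg _ _ _ _ _ _

lemma qpart_rf_le {q i : ℕ} {lf rf : ℕ → ℕ} (h : IsQPartition q i lf rf) :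
    ∀ p, 1 ≤ p → p ≤ q → rf p ≤ i := by
  obtain ⟨h1, h2, h3, h4⟩ := h
  have key : ∀ d p, 1 ≤ p → p + d ≤ q → rf p ≤ rf (p + d) := by
    intro d
    induction d with
    | zero => intro p _ _; simp
    | succ d ih =>
      intro p hp hpd
      have k1 := ih p hp (by omega)
      have k2 : lf (p + d + 1) = rf (p + d) + 1 := h3 (p + d) (by omega) (by omega)
      have k3 : lf (p + d + 1) ≤ rf (p + d + 1) := h4 (p + d + 1) (by omega) (by omega)
      show rf p ≤ rf (p + d + 1)
      omega
  intro p hp hpq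
  have k4 := key (q - p) p hp (by omega)
  have k5 : p + (q - p) = q := by omega
  rw [k5] at k4
  omega

/-- Shrinking map for block endpoints. -/
def shrinkEnd (f : ℕ → ℕ) (r q : ℕ) : ℕ → ℕ := fun p => min (f p) (r + p - q)

end Aux

/-- the constrained minimax regret is monotone in the right end
of the last block: `M(q, r) ≤ M(q, r+1)`. -/
theorem stmt_6 (n k : ℕ) (x : ℕ → ℝ) (τ : ℝ) (wlo whi : ℕ → ℝ)
    (hx : ∀ i, i < n → x i < x (i + 1)) (hτ : 0 < τ)
    (hw : ∀ i, i ≤ n → 0 < wlo i ∧ wlo i ≤ whi i) (hk : 1 ≤ k)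
    (q r : ℕ) (hq : 1 ≤ q) (hr1 : q - 1 ≤ r) (hr2 : r < n) :
    Mreg x τ wlo whi n k q r ≤ Mreg x τ wlo whi n k q (r + 1) := by
  have hn1 : r + 1 ≤ n := hr2
  have hq_le : q ≤ r + 1 := by omega
  unfold Mreg
  apply le_csInf
  · refine ⟨_, fun p => p - 1, fun p => if p = q then r + 1 else p - 1, ⟨?_, ?_, ?_, ?_⟩, rfl⟩
    · rfl
    · simp
    · intro p hp hpq
      have hne : p ≠ q := by omega
      simp only [hne, if_false]
      by_cases h : p + 1 = q <;> simp [h] <;> omega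
    · intro p hp hpq
      by_cases h : p = q <;> simp [h] <;> omega
  rintro b ⟨lf, rf, hpart, rfl⟩
  obtain ⟨hl1, hrq, hcons, hnem⟩ := hpart
  have hrfle : ∀ p, 1 ≤ p → p ≤ q → rf p ≤ r + 1 := by
    intro p hp hpq
    have := qpart_rf_le ⟨hl1, hrq, hcons, hnem⟩ p hp hpq
    omega
  have hpart' : IsQPartition q r (shrinkEnd lf r q) (shrinkEnd rf r q) := by
    refine ⟨?_, ?_, ?_, ?_⟩
    · show min (lf 1) (r + 1 - q) = 0
      omega
    · show min (rf q) (r + q - q) = r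
      omega
    · intro p hp hpq
      have h1 := hcons p hp hpq
      show min (lf (p+1)) (r + (p+1) - q) = min (rf p) (r + p - q) + 1
      omega
    · intro p hp hpq
      have h1 := hnem p hp hpq
      show min (lf p) (r + p - q) ≤ min (rf p) (r + p - q)
      omega
  have hbddM : BddBelow {v : ℝ | ∃ lf rf : ℕ → ℕ, IsQPartition q r lf rf ∧
      maxOver (Finset.Icc 1 q) (fun p => Rlr x τ wlo whi n k (lf p) (rf p)) = v} := by
    refine ⟨0, ?_⟩
    rintro v ⟨_, _, _, rfl⟩
    exact maxOver_nonneg _ _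
  refine le_trans (csInf_le hbddM ⟨shrinkEnd lf r q, shrinkEnd rf r q, hpart', rfl⟩) ?_
  apply maxOver_le (maxOver_nonneg _ _)
  intro p hp
  rw [Finset.mem_Icc] at hp
  refine le_trans ?_ (le_maxOver (Finset.mem_Icc.mpr hp))
  have hlr : lf p ≤ rf p := hnem p hp.1 hp.2
  have hrn : rf p ≤ n := le_trans (hrfle p hp.1 hp.2) hn1
  rcases le_or_gt (lf p) (r + p - q) with h | h
  · have e1 : shrinkEnd lf r q p = lf p := by
      show min (lf p) (r + p - q) = lf p; omega
    have e2 : shrinkEnd rf r q p ≤ rf p := by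
      show min (rf p) (r + p - q) ≤ rf p; omega
    have e3 : lf p ≤ shrinkEnd rf r q p := by
      show lf p ≤ min (rf p) (r + p - q); omega
    rw [e1]
    exact Rlr_mono_right hx hτ hw e3 e2 hrn
  · have e1 : shrinkEnd lf r q p = r + p - q := by
      show min (lf p) (r + p - q) = r + p - q; omega
    have e2 : shrinkEnd rf r q p = r + p - q := by
      show min (rf p) (r + p - q) = r + p - q; omega
    rw [e1, e2]
    exact Rlr_singleton_le hx hτ hw hlr hrn
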